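/- arXiv:2402.18073 — 2 statements merged into one kernel-verified Lean document; each statement's English description precedes it below -/
import Mathlib

section
/- If T is positive definite (in the sense xᵀTx > 0 for all nonzero x) and S is positive definite, then the space-time operator T ⊗ I + I ⊗ S is invertible, where I denotes identity matrices of appropriate sizes. -/
open Kronecker Matrix

lemma kron_left_dot {m n : ℕ} (A : Matrix (Fin m) (Fin m) ℝ)
    (z : Fin m × Fin n → ℝ) :
    z ⬝ᵥ (A ⊗ₖ (1 : Matrix (Fin n) (Fin n) ℝ)).mulVec z
      = ∑ j : Fin n, (fun i => z (i, j)) ⬝ᵥ A.mulVec (fun i => z (i, j)) := by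
  simp only [dotProduct, mulVec, kroneckerMap_apply, Matrix.one_apply,
    Fintype.sum_prod_type, mul_ite, mul_one, mul_zero, Finset.sum_ite_eq,
    Finset.mem_univ, if_true, Finset.mul_sum]
  rw [Finset.sum_comm]
  congr 1; ext j; congr 1; ext i; congr 1; ext k
  simp [mul_ite, ite_mul, mul_zero, zero_mul, Finset.sum_ite_eq, mul_assoc]

lemma kron_right_dot {m n : ℕ} (A : Matrix (Fin n) (Fin n) ℝ)
    (z : Fin m × Fin n → ℝ) :
    z ⬝ᵥ ((1 : Matrix (Fin m) (Fin m) ℝ) ⊗ₖ A).mulVec z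
      = ∑ i : Fin m, (fun j => z (i, j)) ⬝ᵥ A.mulVec (fun j => z (i, j)) := by
  simp only [dotProduct, mulVec, kroneckerMap_apply, Matrix.one_apply,
    Fintype.sum_prod_type, ite_mul, one_mul, zero_mul]
  congr 1; ext i; congr 1; ext j
  rw [Finset.sum_comm]
  simp [mul_ite, mul_zero, Finset.sum_ite_eq, Finset.mul_sum]

lemma sum_term_nonneg {k : ℕ} (A : Matrix (Fin k) (Fin k) ℝ)
    (hA : ∀ x : Fin k → ℝ, x ≠ 0 → 0 < x ⬝ᵥ A.mulVec x) (x : Fin k → ℝ) :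
    0 ≤ x ⬝ᵥ A.mulVec x := by
  by_cases hx : x = 0
  · simp [hx]
  · exact (hA x hx).le

/-- If `T` and `S` are positive definite (in the sense `xᵀ M x > 0` for all
nonzero `x`), then the space-time operator `T ⊗ I + I ⊗ S` is invertible. -/
theorem spacetime_operator_invertible (m n : ℕ)
    (T : Matrix (Fin m) (Fin m) ℝ) (S : Matrix (Fin n) (Fin n) ℝ)
    (hT : ∀ x : Fin m → ℝ, x ≠ 0 → 0 < x ⬝ᵥ T.mulVec x)
    (hS : ∀ x : Fin n → ℝ, x ≠ 0 → 0 < x ⬝ᵥ S.mulVec x) :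
    IsUnit (T ⊗ₖ (1 : Matrix (Fin n) (Fin n) ℝ) +
      (1 : Matrix (Fin m) (Fin m) ℝ) ⊗ₖ S) := by
  set A := T ⊗ₖ (1 : Matrix (Fin n) (Fin n) ℝ) + (1 : Matrix (Fin m) (Fin m) ℝ) ⊗ₖ S
  have key : ∀ z : Fin m × Fin n → ℝ, z ≠ 0 → 0 < z ⬝ᵥ A.mulVec z := by
    intro z hz
    obtain ⟨⟨i0, j0⟩, hp⟩ := Function.ne_iff.mp hz
    have hcol : (fun i => z (i, j0)) ≠ 0 := fun h => hp (congrFun h i0)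
    have h1 : 0 < z ⬝ᵥ (T ⊗ₖ (1 : Matrix (Fin n) (Fin n) ℝ)).mulVec z := by
      rw [kron_left_dot]
      refine Finset.sum_pos' (fun j _ => sum_term_nonneg T hT _) ⟨j0, Finset.mem_univ _, hT _ hcol⟩
    have h2 : 0 ≤ z ⬝ᵥ ((1 : Matrix (Fin m) (Fin m) ℝ) ⊗ₖ S).mulVec z := by
      rw [kron_right_dot]
      exact Finset.sum_nonneg fun i _ => sum_term_nonneg S hS _
    have : z ⬝ᵥ A.mulVec z
        = z ⬝ᵥ (T ⊗ₖ (1 : Matrix (Fin n) (Fin n) ℝ)).mulVec z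
          + z ⬝ᵥ ((1 : Matrix (Fin m) (Fin m) ℝ) ⊗ₖ S).mulVec z := by
      simp [A, Matrix.add_mulVec, dotProduct_add]
    rw [this]
    linarith
  rw [← Matrix.mulVec_injective_iff_isUnit]
  intro x y hxy
  by_contra hne
  have hz : x - y ≠ 0 := sub_ne_zero.mpr hne
  have := key (x - y) hz
  rw [show A.mulVec (x - y) = 0 by rw [Matrix.mulVec_sub, hxy, sub_self]] at this
  simp at this
end

section
/- CUR/skeleton exactness: if A ∈ ℝ^{m×n} has rank r, and C consists of r columns of A and R consists of r rows of A such that the r×r intersection submatrix U₀ (entries of A at the chosen rows and columns) is invertible, then A = C U₀⁻¹ R. -/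
/-!
Since `U₀ = A(I,J)` is a submatrix of `C = A(:,J)`, the columns of `C` have rank at least `r`,
hence span the whole column space of `A`, so `A = C X` for some `X`. Restricting to the rows `I`
gives `R = U₀ X`, i.e. `X = U₀⁻¹ R`.
-/

open Submodule

namespace Matrix

variable {m n k ι K : Type*} [Fintype n] [Fintype k]

theorem exists_eq_mul_of_range_mulVecLin_le {R : Type*} [CommSemiring R]
    {A : Matrix m n R} {C : Matrix m k R}
    (h : LinearMap.range A.mulVecLin ≤ LinearMap.range C.mulVecLin) :
    ∃ X : Matrix k n R, A = C * X := by
  classical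
  have hcol (j : n) : ∃ x : k → R, C *ᵥ x = A.col j := by
    simpa [mulVec_single_one] using h ⟨Pi.single j 1, rfl⟩
  choose x hx using hcol
  refine ⟨(of x)ᵀ, ?_⟩
  ext i j
  simpa [mulVec, dotProduct, mul_apply] using (congrFun (hx j) i).symm

theorem range_mulVecLin_submatrix_id_le {R : Type*} [CommSemiring R]
    (A : Matrix m n R) (J : k → n) :
    LinearMap.range (A.submatrix id J).mulVecLin ≤ LinearMap.range A.mulVecLin := by
  rw [range_mulVecLin, range_mulVecLin]
  exact span_mono fun _ ⟨j, hj⟩ => ⟨J j, hj⟩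

theorem range_mulVecLin_submatrix_id_eq_of_rank_le [Field K] {A : Matrix m n K} {J : k → n}
    (h : A.rank ≤ (A.submatrix id J).rank) :
    LinearMap.range (A.submatrix id J).mulVecLin = LinearMap.range A.mulVecLin :=
  eq_of_le_of_finrank_le (range_mulVecLin_submatrix_id_le A J) h

theorem eq_submatrix_mul_inv_mul_submatrix [Field K] [Fintype ι] [DecidableEq ι]
    (A : Matrix m n K) (I : ι → m) (J : ι → n) (hU : IsUnit (A.submatrix I J))
    (hrank : A.rank ≤ Fintype.card ι) :
    A = A.submatrix id J * (A.submatrix I J)⁻¹ * A.submatrix I id := by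
  have hrank_cols : A.rank ≤ (A.submatrix id J).rank :=
    calc A.rank ≤ Fintype.card ι := hrank
      _ = (A.submatrix I J).rank := (rank_of_isUnit _ hU).symm
      _ ≤ (A.submatrix id J).rank := rank_submatrix_le (A.submatrix id J) I id
  obtain ⟨X, hX⟩ := exists_eq_mul_of_range_mulVecLin_le
    (range_mulVecLin_submatrix_id_eq_of_rank_le hrank_cols).ge
  have hrows : A.submatrix I id = A.submatrix I J * X := by
    conv_lhs => rw [hX]
    ext i j
    simp [mul_apply]
  have hdet : IsUnit (A.submatrix I J).det := (isUnit_iff_isUnit_det _).mp hU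
  rw [Matrix.mul_assoc, hrows, nonsing_inv_mul_cancel_left _ X hdet]
  exact hX

end Matrix

theorem cur_decomposition_exact_general (m n r : ℕ)
    (A : Matrix (Fin m) (Fin n) ℝ) (hrank : A.rank = r)
    (I : Fin r → Fin m) (J : Fin r → Fin n)
    (hU : IsUnit (A.submatrix I J)) :
    A = A.submatrix id J * (A.submatrix I J)⁻¹ * A.submatrix I id :=
  A.eq_submatrix_mul_inv_mul_submatrix I J hU (hrank.trans (Fintype.card_fin r).symm).le

/-- CUR/skeleton exactness: if `A` has rank `r`, `C` consists of `r` columns of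
`A`, `R` of `r` rows of `A`, and the `r × r` intersection submatrix `U₀` is
invertible, then `A = C U₀⁻¹ R`. -/
theorem cur_decomposition_exact (m n r : ℕ)
    (A : Matrix (Fin m) (Fin n) ℝ) (hrank : A.rank = r)
    (I : Fin r → Fin m) (J : Fin r → Fin n)
    (hI : Function.Injective I) (hJ : Function.Injective J)
    (hU : IsUnit (A.submatrix I J)) :
    A = A.submatrix id J * (A.submatrix I J)⁻¹ * A.submatrix I id :=
  cur_decomposition_exact_general m n r A hrank I J hU
end
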